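/- arXiv:1609.04960 — 8 statements merged into one kernel-verified Lean document; each statement's English description precedes it below -/
import Mathlib

section
/- Let c ⊆ N and let L_c be a nonempty collection of proper subsets of c each of which is obtained by removing exactly one element from c (i.e., every x ∈ L_c satisfies x ⊂ c and |c \ x| = 1). Let R = ∪_{x ∈ L_c} (c \ x). Then the simple game Γ(N, L_c) is weighted: with quota q = |R|, weights w_i = |R| for i ∉ c, w_i = 1 for i ∈ R, and w_i = 0 for i ∈ c \ R, a coalition S wins in Γ(N, L_c) if and only if Σ_{i ∈ S} w_i ≥ q. -/
open Finset

/-- Winning predicate of the simple game determined by a collection `L` of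
(maximal) losing coalitions: `S` loses iff `S ⊆ y` for some `y ∈ L`. -/
def wins {n : ℕ} (L : Finset (Finset (Fin n))) (S : Finset (Fin n)) : Prop :=
  ∀ y ∈ L, ¬ S ⊆ y

/-- A winning predicate is weighted with quota `q` and nonnegative weights `w`. -/
def IsWeightedRepr {n : ℕ} (win : Finset (Fin n) → Prop) (q : ℝ) (w : Fin n → ℝ) : Prop :=
  0 ≤ q ∧ (∀ i, 0 ≤ w i) ∧ ∀ S : Finset (Fin n), win S ↔ q ≤ ∑ i ∈ S, w i

/-- A winning predicate is weighted. -/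
def IsWeighted {n : ℕ} (win : Finset (Fin n) → Prop) : Prop :=
  ∃ q w, IsWeightedRepr win q w

/-- Hamming distance between coalitions. -/
def hdist {n : ℕ} (x y : Finset (Fin n)) : ℕ := (x \ y).card + (y \ x).card

/-- The dimension of a game given by its winning predicate: the least `d` such that
the game is the intersection of `d` weighted games. -/
noncomputable def gameDim {n : ℕ} (win : Finset (Fin n) → Prop) : ℕ :=
  sInf {d | ∃ W : Fin d → (Finset (Fin n) → Prop),
    (∀ i, IsWeighted (W i)) ∧ ∀ S, win S ↔ ∀ i, W i S}

/-- A simple game on `n` players. -/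
structure SimpleGame (n : ℕ) where
  win : Finset (Fin n) → Prop
  mono : ∀ S T : Finset (Fin n), S ⊆ T → win S → win T
  empty_not_win : ¬ win ∅
  univ_win : win Finset.univ

/-- The maximal losing coalitions of a simple game. -/
def maxLosing {n : ℕ} (G : SimpleGame n) : Set (Finset (Fin n)) :=
  {T | ¬ G.win T ∧ ∀ T' : Finset (Fin n), T ⊂ T' → G.win T'}

/-- `C` is a binary covering code of length `n` with covering radius `1`. -/
def IsCoveringCode {n : ℕ} (C : Finset (Finset (Fin n))) : Prop :=
  ∀ x : Finset (Fin n), ∃ c ∈ C, hdist x c ≤ 1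

/-- `K n`: the minimum size of a binary covering code of length `n`, radius `1`. -/
noncomputable def K (n : ℕ) : ℕ :=
  sInf {k | ∃ C : Finset (Finset (Fin n)), IsCoveringCode C ∧ C.card = k}


/-
Every `x ∈ Lc` is `c` minus one player `a_x`, and `R` collects these `a_x`. A coalition
containing a player outside `c` is contained in no `x` and gets weight at least `|R|` from
that player alone. A coalition `S ⊆ c` escapes `x` exactly when it contains `a_x`, so it wins
iff `R ⊆ S`; its weight counts the members of `R` it contains, which reaches `|R|` iff `R ⊆ S`.
-/

theorem Finset.not_subset_iff_mem_of_sdiff_eq_singleton {α : Type*} [DecidableEq α]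
    {S c y : Finset α} {a : α} (hSc : S ⊆ c) (hcy : c \ y = {a}) :
    ¬ S ⊆ y ↔ a ∈ S := by
  have hay : a ∉ y := (mem_sdiff.mp (hcy ▸ mem_singleton_self a)).2
  constructor
  · intro hSy
    obtain ⟨j, hjS, hjy⟩ := not_subset.mp hSy
    have hjcy : j ∈ c \ y := mem_sdiff.mpr ⟨hSc hjS, hjy⟩
    rw [hcy, mem_singleton] at hjcy
    exact hjcy ▸ hjS
  · exact fun haS hSy => hay (hSy haS)

theorem Finset.card_le_card_inter_iff_subset {α : Type*} [DecidableEq α] {R S : Finset α} :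
    #R ≤ #(S ∩ R) ↔ R ⊆ S := by
  constructor
  · intro h
    rw [← eq_of_subset_of_card_le inter_subset_right h]
    exact inter_subset_left
  · intro h
    rw [inter_eq_right.mpr h]

section OneElementRemoved

variable {n : ℕ} {c : Finset (Fin n)} {Lc : Finset (Finset (Fin n))} {R : Finset (Fin n)}
  {w : Fin n → ℝ}

theorem wins_iff_subset_of_subset (hLc : ∀ x ∈ Lc, (c \ x).card = 1)
    (hR : ∀ i, i ∈ R ↔ ∃ x ∈ Lc, i ∈ c \ x) {S : Finset (Fin n)} (hSc : S ⊆ c) :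
    wins Lc S ↔ R ⊆ S := by
  constructor
  · intro hwin i hiR
    obtain ⟨x, hx, hix⟩ := (hR i).mp hiR
    obtain ⟨a, ha⟩ := card_eq_one.mp (hLc x hx)
    rw [ha, mem_singleton] at hix
    exact hix ▸ (not_subset_iff_mem_of_sdiff_eq_singleton hSc ha).mp (hwin x hx)
  · intro hRS y hy
    obtain ⟨a, ha⟩ := card_eq_one.mp (hLc y hy)
    have haR : a ∈ R := (hR a).mpr ⟨y, hy, ha ▸ mem_singleton_self a⟩
    exact (not_subset_iff_mem_of_sdiff_eq_singleton hSc ha).mpr (hRS haR)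

theorem wins_of_not_subset (hLc : ∀ x ∈ Lc, x ⊆ c) {S : Finset (Fin n)} (hSc : ¬ S ⊆ c) :
    wins Lc S :=
  fun y hy hSy => hSc (hSy.trans (hLc y hy))

theorem sum_weight_eq_card_inter_of_subset
    (hw : ∀ i, w i = if i ∉ c then (R.card : ℝ) else if i ∈ R then 1 else 0)
    {S : Finset (Fin n)} (hSc : S ⊆ c) :
    ∑ i ∈ S, w i = (#(S ∩ R) : ℝ) := by
  rw [← filter_mem_eq_inter, ← sum_boole]
  refine sum_congr rfl fun i hi => ?_
  rw [hw i, if_neg (not_not.mpr (hSc hi))]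

theorem card_le_sum_weight_of_not_subset
    (hw : ∀ i, w i = if i ∉ c then (R.card : ℝ) else if i ∈ R then 1 else 0)
    {S : Finset (Fin n)} (hSc : ¬ S ⊆ c) :
    (#R : ℝ) ≤ ∑ i ∈ S, w i := by
  obtain ⟨i, hiS, hic⟩ := not_subset.mp hSc
  have hw_nonneg : ∀ j, 0 ≤ w j := fun j => by rw [hw j]; split_ifs <;> positivity
  calc (#R : ℝ) = w i := by rw [hw i, if_pos hic]
    _ ≤ ∑ j ∈ S, w j := single_le_sum (fun j _ => hw_nonneg j) hiS

end OneElementRemoved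

theorem stmt1_general {n : ℕ} (c : Finset (Fin n)) (Lc : Finset (Finset (Fin n)))
    (hLc : ∀ x ∈ Lc, x ⊂ c ∧ (c \ x).card = 1)
    (R : Finset (Fin n)) (hR : ∀ i, i ∈ R ↔ ∃ x ∈ Lc, i ∈ c \ x)
    (w : Fin n → ℝ)
    (hw : ∀ i, w i = if i ∉ c then (R.card : ℝ) else if i ∈ R then 1 else 0) :
    ∀ S : Finset (Fin n), wins Lc S ↔ (R.card : ℝ) ≤ ∑ i ∈ S, w i := by
  intro S
  by_cases hSc : S ⊆ c
  · rw [wins_iff_subset_of_subset (fun x hx => (hLc x hx).2) hR hSc,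
      sum_weight_eq_card_inter_of_subset hw hSc, Nat.cast_le, card_le_card_inter_iff_subset]
  · exact iff_of_true (wins_of_not_subset (fun x hx => (hLc x hx).1.1) hSc)
      (card_le_sum_weight_of_not_subset hw hSc)

theorem stmt1 {n : ℕ} (c : Finset (Fin n)) (Lc : Finset (Finset (Fin n)))
    (hne : Lc.Nonempty) (hLc : ∀ x ∈ Lc, x ⊂ c ∧ (c \ x).card = 1)
    (R : Finset (Fin n)) (hR : ∀ i, i ∈ R ↔ ∃ x ∈ Lc, i ∈ c \ x)
    (w : Fin n → ℝ)
    (hw : ∀ i, w i = if i ∉ c then (R.card : ℝ) else if i ∈ R then 1 else 0) :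
    ∀ S : Finset (Fin n), wins Lc S ↔ (R.card : ℝ) ≤ ∑ i ∈ S, w i :=
  stmt1_general c Lc hLc R hR w hw
end

section
/- Let c ⊆ N and let L_c be a nonempty collection of supersets of c each obtained by adding exactly one element to c (i.e., every x ∈ L_c satisfies c ⊂ x and |x \ c| = 1). Let A = ∪_{x ∈ L_c} (x \ c). Then Γ(N, L_c) is weighted: with quota q = 2, weights w_i = 2 for i ∉ c ∪ A, w_i = 1 for i ∈ A, and w_i = 0 for i ∈ c, a coalition S wins in Γ(N, L_c) if and only if Σ_{i ∈ S} w_i ≥ 2. -/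
open Finset

/-!
Every `x ∈ L_c` is `insert a c` for some `a ∈ A`, and conversely, so `S` loses iff
`S ⊆ insert a c` for some `a ∈ A`. The weights vanish on `c`, so such an `S` weighs at
most `w a = 1`. If `S` is not of this form, then either it contains a player outside
`c ∪ A` (weight `2`), or it lies in `c ∪ A` and meets `A` in two distinct players.
-/

section

variable {α : Type*} [DecidableEq α]

theorem Finset.eq_insert_of_mem_sdiff_of_card_sdiff_eq_one {c x : Finset α} {a : α}
    (hcx : c ⊆ x) (hcard : #(x \ c) = 1) (ha : a ∈ x \ c) : x = insert a c := by
  obtain ⟨b, hb⟩ := card_eq_one.1 hcard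
  rw [hb, mem_singleton] at ha
  rw [← union_sdiff_of_subset hcx, hb, ha, insert_eq, union_comm]

theorem eq_image_insert_of_forall_card_sdiff_eq_one {c A : Finset α} {L : Finset (Finset α)}
    (hL : ∀ x ∈ L, c ⊂ x ∧ #(x \ c) = 1) (hA : ∀ i, i ∈ A ↔ ∃ x ∈ L, i ∈ x \ c) :
    L = A.image (insert · c) := by
  ext y
  simp only [mem_image]
  constructor
  · intro hy
    obtain ⟨a, ha⟩ := card_pos.1 ((hL y hy).2 ▸ Nat.one_pos)
    exact ⟨a, (hA a).2 ⟨y, hy, ha⟩,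
      (eq_insert_of_mem_sdiff_of_card_sdiff_eq_one (hL y hy).1.1 (hL y hy).2 ha).symm⟩
  · rintro ⟨a, haA, rfl⟩
    obtain ⟨x, hx, hax⟩ := (hA a).1 haA
    rwa [← eq_insert_of_mem_sdiff_of_card_sdiff_eq_one (hL x hx).1.1 (hL x hx).2 hax]

theorem two_le_sum_iff_forall_not_subset_insert {c A S : Finset α} {w : α → ℝ}
    (hAne : A.Nonempty) (hwc : ∀ i ∈ c, w i = 0) (hwA : ∀ i ∈ A, w i = 1)
    (hw2 : ∀ i ∉ c ∪ A, w i = 2) :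
    2 ≤ ∑ i ∈ S, w i ↔ ∀ a ∈ A, ¬ S ⊆ insert a c := by
  have hAc : ∀ a ∈ A, a ∉ c := fun a ha hac => by
    simpa [hwc a hac] using hwA a ha
  have hw_nonneg : ∀ i, 0 ≤ w i := fun i => by
    by_cases hc : i ∈ c
    · rw [hwc i hc]
    by_cases hA : i ∈ A
    · rw [hwA i hA]; norm_num
    · rw [hw2 i (by simp [hc, hA])]; norm_num
  have sum_mono : ∀ {T U : Finset α}, T ⊆ U → ∑ i ∈ T, w i ≤ ∑ i ∈ U, w i :=
    fun hTU => sum_le_sum_of_subset_of_nonneg hTU fun i _ _ => hw_nonneg i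
  constructor
  · intro h2 a ha hS
    have : ∑ i ∈ insert a c, w i = 1 := by
      rw [sum_insert (hAc a ha), hwA a ha, sum_eq_zero hwc, add_zero]
    linarith [sum_mono hS]
  · intro hS
    by_cases hout : ∃ i ∈ S, i ∉ c ∪ A
    · obtain ⟨i, hiS, hi⟩ := hout
      exact hw2 i hi ▸ single_le_sum (fun j _ => hw_nonneg j) hiS
    push Not at hout
    have escape : ∀ a ∈ A, ∃ b ∈ S, b ∈ A ∧ b ≠ a := fun a ha => by
      obtain ⟨b, hbS, hb⟩ := not_subset.1 (hS a ha)
      rw [mem_insert, not_or] at hb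
      exact ⟨b, hbS, (mem_union.1 (hout b hbS)).resolve_left hb.2, hb.1⟩
    obtain ⟨a, ha⟩ := hAne
    obtain ⟨i, hiS, hiA, -⟩ := escape a ha
    obtain ⟨j, hjS, hjA, hji⟩ := escape i hiA
    calc (2 : ℝ) = ∑ k ∈ {i, j}, w k := by
          rw [sum_pair hji.symm, hwA i hiA, hwA j hjA]; norm_num
      _ ≤ ∑ k ∈ S, w k := sum_mono (insert_subset hiS (singleton_subset_iff.2 hjS))

end

theorem wins_image_insert_iff {n : ℕ} {c A S : Finset (Fin n)} :
    wins (A.image (insert · c)) S ↔ ∀ a ∈ A, ¬ S ⊆ insert a c := by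
  simp [wins]

theorem stmt2 {n : ℕ} (c : Finset (Fin n)) (Lc : Finset (Finset (Fin n)))
    (hne : Lc.Nonempty) (hLc : ∀ x ∈ Lc, c ⊂ x ∧ (x \ c).card = 1)
    (A : Finset (Fin n)) (hA : ∀ i, i ∈ A ↔ ∃ x ∈ Lc, i ∈ x \ c)
    (w : Fin n → ℝ)
    (hw : ∀ i, w i = if i ∉ c ∪ A then (2 : ℝ) else if i ∈ A then 1 else 0) :
    ∀ S : Finset (Fin n), wins Lc S ↔ (2 : ℝ) ≤ ∑ i ∈ S, w i := by
  intro S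
  have hLA := eq_image_insert_of_forall_card_sdiff_eq_one hLc hA
  have hAc : ∀ i ∈ A, i ∉ c := fun i hi => by
    obtain ⟨x, -, hix⟩ := (hA i).1 hi
    exact (mem_sdiff.1 hix).2
  rw [hLA, wins_image_insert_iff, two_le_sum_iff_forall_not_subset_insert
    (image_nonempty.1 (hLA ▸ hne))]
  · intro i hi
    simp [hw i, hi, mt (hAc i) (not_not.2 hi)]
  · intro i hi
    simp [hw i, hi]
  · intro i hi
    simp [hw i, hi]
end

section
/- Let c ⊆ N and let L_c be an antichain in 2^N (no member contains another) such that every x ∈ L_c has Hamming distance at most 1 from c. Then Γ(N, L_c) is a weighted game. -/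
open Finset

/-! A coalition at Hamming distance at most one from `c` equals `c`, is covered by `c`, or covers
`c`, and in an antichain these cases cannot mix. So `Lc` is `{c}`, a family `{c \ {i} | i ∈ A}`, or
a nonempty family `{c ∪ {j} | j ∈ B}` with `B` disjoint from `c`. Accordingly `S` wins iff
`S ⊄ c` (weight 1 outside `c`, quota 1), iff `S ⊆ c → A ⊆ S` (weight 1 on `A` and `|A|` outside
`c`, quota `|A|`), or iff `S ⊆ c ∪ B → 2 ≤ |S ∩ B|` (weight 1 on `B` and 2 outside `c ∪ B`,
quota 2). -/

lemma IsAntichain.eq_singleton_or_forall_covBy_or_forall_covBy {α : Type*} [PartialOrder α]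
    {s : Set α} {c : α} (hs : IsAntichain (· ≤ ·) s) (hnear : ∀ x ∈ s, x = c ∨ x ⋖ c ∨ c ⋖ x) :
    s = {c} ∨ (∀ x ∈ s, x ⋖ c) ∨ (s.Nonempty ∧ ∀ x ∈ s, c ⋖ x) := by
  by_cases hc : c ∈ s
  · refine Or.inl (Set.eq_singleton_iff_unique_mem.2 ⟨hc, fun x hx => ?_⟩)
    rcases hnear x hx with rfl | hxc | hcx
    · rfl
    · exact hs.eq hx hc hxc.le
    · exact (hs.eq hc hx hcx.le).symm
  have hnear' : ∀ x ∈ s, x ⋖ c ∨ c ⋖ x := fun x hx =>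
    (hnear x hx).resolve_left fun h => hc (h ▸ hx)
  by_cases hup : ∃ y ∈ s, c ⋖ y
  · obtain ⟨y, hy, hcy⟩ := hup
    refine Or.inr (Or.inr ⟨⟨y, hy⟩, fun x hx => (hnear' x hx).resolve_left fun hxc => ?_⟩)
    have hxy : x < y := hxc.lt.trans hcy.lt
    exact hxy.ne (hs.eq hx hy hxy.le)
  · push Not at hup
    exact Or.inr (Or.inl fun x hx => (hnear' x hx).resolve_right (hup x hx))

variable {n : ℕ}

lemma eq_or_covBy_or_covBy_of_hdist_le_one {x c : Finset (Fin n)} (h : hdist x c ≤ 1) :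
    x = c ∨ x ⋖ c ∨ c ⋖ x := by
  unfold hdist at h
  rcases Nat.eq_zero_or_pos #(x \ c) with hxc | hxc
  · have hsub : x ⊆ c := sdiff_eq_empty_iff_subset.1 (card_eq_zero.1 hxc)
    rcases Nat.eq_zero_or_pos #(c \ x) with hcx | hcx
    · exact Or.inl (hsub.antisymm (sdiff_eq_empty_iff_subset.1 (card_eq_zero.1 hcx)))
    · exact Or.inr (Or.inl (covBy_iff_card_sdiff_eq_one.2 ⟨hsub, by omega⟩))
  · have hsup : c ⊆ x := sdiff_eq_empty_iff_subset.1 (card_eq_zero.1 (by omega))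
    exact Or.inr (Or.inr (covBy_iff_card_sdiff_eq_one.2 ⟨hsup, by omega⟩))

lemma wins_singleton_iff (c S : Finset (Fin n)) : wins {c} S ↔ ¬ S ⊆ c := by
  simp [wins]

lemma wins_image_erase_iff (c A S : Finset (Fin n)) :
    wins (A.image c.erase) S ↔ (S ⊆ c → A ⊆ S) := by
  simp only [wins, forall_mem_image, subset_erase, not_and, not_not]
  exact ⟨fun h hS i hi => h hi hS, fun h i hi hS => h hS hi⟩

lemma wins_image_insert_iff_s4 {c B : Finset (Fin n)} (hB : B.Nonempty) (hBc : Disjoint B c)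
    (S : Finset (Fin n)) : wins (B.image (insert · c)) S ↔ (S ⊆ c ∪ B → 1 < #(S ∩ B)) := by
  simp only [wins, forall_mem_image]
  constructor
  · intro h hS
    by_contra! hle
    obtain ⟨j, hjB, hj⟩ : ∃ j ∈ B, S ∩ B ⊆ {j} := by
      rcases (S ∩ B).eq_empty_or_nonempty with he | ⟨j, hj⟩
      · obtain ⟨j, hj⟩ := hB
        exact ⟨j, hj, by simp [he]⟩
      · exact ⟨j, (mem_inter.1 hj).2,
          fun x hx => mem_singleton.2 (card_le_one.1 hle x hx j hj)⟩
    refine h hjB fun x hx => ?_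
    rcases mem_union.1 (hS hx) with hxc | hxB
    · exact mem_insert_of_mem hxc
    · rw [mem_singleton.1 (hj (mem_inter.2 ⟨hx, hxB⟩))]
      exact mem_insert_self j c
  · intro h j hj hS
    have hSB : S ⊆ c ∪ B := hS.trans (insert_subset (mem_union_right _ hj) subset_union_left)
    have hSj : S ∩ B ⊆ {j} := fun x hx => by
      obtain ⟨hxS, hxB⟩ := mem_inter.1 hx
      rcases mem_insert.1 (hS hxS) with rfl | hxc
      · exact mem_singleton_self x
      · exact absurd hxc (disjoint_left.1 hBc hxB)
    have := card_le_card hSj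
    rw [card_singleton] at this
    exact absurd (h hSB) (by omega)

lemma isWeighted_of_nat {win : Finset (Fin n) → Prop} (q : ℕ) (w : Fin n → ℕ)
    (h : ∀ S, win S ↔ q ≤ ∑ i ∈ S, w i) : IsWeighted win :=
  ⟨q, fun i => w i, Nat.cast_nonneg _, fun _ => Nat.cast_nonneg _, fun S => by
    rw [h S, ← Nat.cast_sum, Nat.cast_le]⟩

lemma one_le_card_sdiff_iff {S T : Finset (Fin n)} : 1 ≤ #(S \ T) ↔ ¬ S ⊆ T := by
  rw [Nat.one_le_iff_ne_zero, Ne, card_eq_zero, sdiff_eq_empty_iff_subset]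

lemma isWeighted_wins_singleton (c : Finset (Fin n)) : IsWeighted (wins {c}) := by
  refine isWeighted_of_nat 1 (fun i => if i ∉ c then 1 else 0) fun S => ?_
  rw [wins_singleton_iff, sum_boole, filter_notMem_eq_sdiff, Nat.cast_id, one_le_card_sdiff_iff]

lemma isWeighted_wins_image_erase (c A : Finset (Fin n)) : IsWeighted (wins (A.image c.erase)) := by
  refine isWeighted_of_nat #A
    (fun i => (if i ∈ A then 1 else 0) + #A * if i ∉ c then 1 else 0) fun S => ?_
  rw [wins_image_erase_iff, sum_add_distrib, ← mul_sum, sum_boole, sum_boole,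
    filter_mem_eq_inter, filter_notMem_eq_sdiff, Nat.cast_id, Nat.cast_id]
  have hA : #A ≤ #(S ∩ A) ↔ A ⊆ S :=
    ⟨fun h => inter_eq_right.1 (eq_of_subset_of_card_le inter_subset_right h),
      fun h => by rw [inter_eq_right.2 h]⟩
  by_cases hS : S ⊆ c
  · rw [sdiff_eq_empty_iff_subset.2 hS, card_empty, mul_zero, add_zero, hA]
    exact ⟨fun h => h hS, fun h _ => h⟩
  · have := Nat.le_mul_of_pos_right #A (one_le_card_sdiff_iff.2 hS)
    exact ⟨fun _ => by omega, fun _ h => absurd h hS⟩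

lemma isWeighted_wins_image_insert {c B : Finset (Fin n)} (hB : B.Nonempty) (hBc : Disjoint B c) :
    IsWeighted (wins (B.image (insert · c))) := by
  refine isWeighted_of_nat 2
    (fun i => (if i ∈ B then 1 else 0) + 2 * if i ∉ c ∪ B then 1 else 0) fun S => ?_
  rw [wins_image_insert_iff_s4 hB hBc, sum_add_distrib, ← mul_sum, sum_boole, sum_boole,
    filter_mem_eq_inter, filter_notMem_eq_sdiff, Nat.cast_id, Nat.cast_id]
  by_cases hS : S ⊆ c ∪ B
  · rw [sdiff_eq_empty_iff_subset.2 hS, card_empty]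
    exact ⟨fun h => by have := h hS; omega, fun h _ => by omega⟩
  · have := one_le_card_sdiff_iff.2 hS
    exact ⟨fun _ => by omega, fun _ h => absurd h hS⟩

theorem stmt4 {n : ℕ} (c : Finset (Fin n)) (Lc : Finset (Finset (Fin n)))
    (hanti : IsAntichain (· ⊆ ·) (Lc : Set (Finset (Fin n))))
    (hclose : ∀ x ∈ Lc, hdist x c ≤ 1) :
    IsWeighted (wins Lc) := by
  have hnear x (hx : x ∈ (Lc : Set _)) := eq_or_covBy_or_covBy_of_hdist_le_one (hclose x hx)
  rcases hanti.eq_singleton_or_forall_covBy_or_forall_covBy hnear with hLc | hdown | ⟨hne, hup⟩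
  · rw [coe_eq_singleton.1 hLc]
    exact isWeighted_wins_singleton c
  · obtain ⟨A, -, rfl⟩ : ∃ A ⊆ c, A.image c.erase = Lc :=
      subset_image_iff.1 fun x hx => mem_image.2 (covBy_iff_exists_erase.1 (hdown x hx))
    exact isWeighted_wins_image_erase c A
  · obtain ⟨B, hBc, rfl⟩ : ∃ B ⊆ cᶜ, B.image (insert · c) = Lc :=
      subset_image_iff.1 fun x hx => by simpa using covBy_iff_exists_insert.1 (hup x hx)
    exact isWeighted_wins_image_insert (image_nonempty.1 hne)
      (subset_compl_iff_disjoint_right.1 hBc)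
end

section
/- For every positive integer n, the maximum dimension d_n of a simple game with n players satisfies d_n ≤ K_n, where K_n is the minimum size of a binary covering code of length n with covering radius 1 (i.e., the minimum size of a set C ⊆ 2^N such that every subset of N is within Hamming distance 1 of some member of C). -/
open Finset

/-!
A simple game is the intersection, over its maximal losing coalitions `T`, of the games
`S ⊈ T`. Given a covering code `C` of radius 1, assign each maximal losing coalition to a
codeword within distance 1. The coalitions assigned to `c` form an antichain in the Hamming
ball around `c`; since `c \ {j} ⊆ c ⊆ c ∪ {i}`, either all of them are of the form `c \ {j}`,
and they define the weighted game `S ⊆ c → B ⊆ S`, or all of them contain `c` and have at most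
one more player, and they define the weighted game "`S \ c ⊈ A` or `|S \ c| ≥ 2`". So the game
is an intersection of `|C|` weighted games.
-/

section

variable {n : ℕ}

lemma sum_ite_mem_add_ite_notMem (a b : ℕ) (P Q S : Finset (Fin n)) :
    ∑ i ∈ S, ((if i ∈ P then a else 0) + (if i ∉ Q then b else 0))
      = #(S ∩ P) * a + #(S \ Q) * b := by
  rw [sum_add_distrib, sum_ite_mem, ← sum_filter, ← sdiff_eq_filter]
  simp only [sum_const, smul_eq_mul]

lemma isWeighted_imp_subset (B c : Finset (Fin n)) :
    IsWeighted fun S => S ⊆ c → B ⊆ S := by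
  refine isWeighted_of_nat #B (fun i => (if i ∈ B then 1 else 0) + (if i ∉ c then #B else 0))
    fun S => ?_
  rw [sum_ite_mem_add_ite_notMem]
  by_cases hSc : S ⊆ c
  · rw [sdiff_eq_empty_iff_subset.mpr hSc, card_empty, zero_mul, add_zero, mul_one,
      imp_iff_right hSc, ← inter_eq_right, eq_iff_card_le_of_subset inter_subset_right]
  · obtain ⟨i, hi⟩ := sdiff_nonempty.mpr hSc
    have hout : 1 ≤ #(S \ c) := card_pos.mpr ⟨i, hi⟩
    simp only [hSc, false_imp_iff, true_iff]
    nlinarith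

lemma isWeighted_not_sdiff_subset_and_card_le_one {A c : Finset (Fin n)}
    (hA : Disjoint A c) :
    IsWeighted fun S => ¬ (S \ c ⊆ A ∧ #(S \ c) ≤ 1) := by
  refine isWeighted_of_nat 2 (fun i => (if i ∈ A then 1 else 0) + (if i ∉ c ∪ A then 2 else 0))
    fun S => ?_
  have hinter : (S \ c) ∩ A = S ∩ A := by
    rw [sdiff_inter_right_comm, (hA.mono_left inter_subset_right).sdiff_eq_left]
  have hsdiff : (S \ c) \ A = S \ (c ∪ A) := sdiff_sdiff_left
  have hcard := card_sdiff_add_card_inter (S \ c) A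
  rw [sum_ite_mem_add_ite_notMem, ← hinter, ← hsdiff, ← sdiff_eq_empty_iff_subset, ← card_eq_zero]
  omega

lemma superset_or_eq_erase_of_hdist_le_one {T c : Finset (Fin n)} (h : hdist T c ≤ 1) :
    (c ⊆ T ∧ #(T \ c) ≤ 1) ∨ ∃ j ∈ c, T = c.erase j := by
  unfold hdist at h
  rcases Nat.eq_zero_or_pos #(c \ T) with h0 | hpos
  · exact .inl ⟨sdiff_eq_empty_iff_subset.mp (card_eq_zero.mp h0), by omega⟩
  · right
    have hTc : T ⊆ c := sdiff_eq_empty_iff_subset.mp (card_eq_zero.mp (by omega))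
    obtain ⟨j, hj⟩ := card_eq_one.mp (show #(c \ T) = 1 by omega)
    refine ⟨j, (mem_sdiff.mp (hj ▸ mem_singleton_self j)).1, ?_⟩
    rw [← sdiff_singleton_eq_erase, ← hj, Finset.sdiff_sdiff_eq_self hTc]

lemma forall_superset_or_forall_eq_erase
    {L : Finset (Finset (Fin n))} {c : Finset (Fin n)}
    (hball : ∀ T ∈ L, hdist T c ≤ 1) (hanti : IsAntichain (· ⊆ ·) (L : Set (Finset (Fin n)))) :
    (L.Nonempty ∧ ∀ T ∈ L, c ⊆ T ∧ #(T \ c) ≤ 1) ∨ ∀ T ∈ L, ∃ j ∈ c, T = c.erase j := by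
  by_cases hlow : ∀ T ∈ L, ∃ j ∈ c, T = c.erase j
  · exact .inr hlow
  push Not at hlow
  obtain ⟨T₀, hT₀, hT₀low⟩ := hlow
  have hT₀up := (superset_or_eq_erase_of_hdist_le_one (hball T₀ hT₀)).resolve_right
    (by simpa using hT₀low)
  refine .inl ⟨⟨T₀, hT₀⟩, fun T hT => ?_⟩
  refine (superset_or_eq_erase_of_hdist_le_one (hball T hT)).resolve_right ?_
  rintro ⟨j, hj, rfl⟩
  have hne : c.erase j ≠ T₀ := fun h => hT₀low j hj h.symm
  exact hanti hT hT₀ hne ((erase_subset j c).trans hT₀up.1)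

lemma wins_iff_of_forall_eq_erase {L : Finset (Finset (Fin n))} {c : Finset (Fin n)}
    (hL : ∀ T ∈ L, ∃ j ∈ c, T = c.erase j) (S : Finset (Fin n)) :
    wins L S ↔ (S ⊆ c → {j ∈ c | c.erase j ∈ L} ⊆ S) := by
  constructor
  · intro hS hSc j hj
    by_contra hjS
    exact hS _ (mem_filter.mp hj).2 (subset_erase.mpr ⟨hSc, hjS⟩)
  · rintro hS T hT hST
    obtain ⟨j, hj, rfl⟩ := hL T hT
    obtain ⟨hSc, hjS⟩ := subset_erase.mp hST
    exact hjS (hS hSc (mem_filter.mpr ⟨hj, hT⟩))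

lemma wins_iff_of_forall_superset {L : Finset (Finset (Fin n))} {c : Finset (Fin n)}
    (hne : L.Nonempty) (hL : ∀ T ∈ L, c ⊆ T ∧ #(T \ c) ≤ 1) (S : Finset (Fin n)) :
    wins L S ↔ ¬ (S \ c ⊆ L.biUnion (· \ c) ∧ #(S \ c) ≤ 1) := by
  have hsub : ∀ T ∈ L, S ⊆ T ↔ S \ c ⊆ T \ c := fun T hT => by
    constructor
    · exact fun h => sdiff_subset_sdiff h subset_rfl
    · intro h x hx
      by_cases hxc : x ∈ c
      · exact (hL T hT).1 hxc
      · exact (mem_sdiff.mp (h (mem_sdiff.mpr ⟨hx, hxc⟩))).1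
  suffices (∃ T ∈ L, S ⊆ T) ↔ S \ c ⊆ L.biUnion (· \ c) ∧ #(S \ c) ≤ 1 by
    simpa [wins] using not_congr this
  constructor
  · rintro ⟨T, hT, hST⟩
    have hcT := (hsub T hT).1 hST
    exact ⟨hcT.trans (subset_biUnion_of_mem (· \ c) hT), (card_le_card hcT).trans (hL T hT).2⟩
  · rintro ⟨hA, hcard⟩
    rcases (S \ c).eq_empty_or_nonempty with h0 | ⟨i, hi⟩
    · obtain ⟨T, hT⟩ := hne
      exact ⟨T, hT, (hsub T hT).2 (h0 ▸ empty_subset _)⟩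
    · obtain ⟨T, hT, hiT⟩ := mem_biUnion.mp (hA hi)
      refine ⟨T, hT, (hsub T hT).2 fun x hx => ?_⟩
      rwa [card_le_one.mp hcard x hx i hi]

lemma isWeighted_wins_of_hdist_le_one {L : Finset (Finset (Fin n))} {c : Finset (Fin n)}
    (hball : ∀ T ∈ L, hdist T c ≤ 1) (hanti : IsAntichain (· ⊆ ·) (L : Set (Finset (Fin n)))) :
    IsWeighted (wins L) := by
  rcases forall_superset_or_forall_eq_erase hball hanti with ⟨hne, hup⟩ | hlow
  · rw [show wins L = _ from funext fun S => propext (wins_iff_of_forall_superset hne hup S)]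
    exact isWeighted_not_sdiff_subset_and_card_le_one
      ((disjoint_biUnion_left _ _ _).mpr fun T _ => sdiff_disjoint)
  · rw [show wins L = _ from funext fun S => propext (wins_iff_of_forall_eq_erase hlow S)]
    exact isWeighted_imp_subset _ c

lemma isAntichain_maxLosing (G : SimpleGame n) :
    IsAntichain (· ⊆ ·) (maxLosing G) :=
  fun _ hT _ hT' hne hsub => hT'.1 (hT.2 _ (ssubset_of_subset_of_ne hsub hne))

lemma SimpleGame.win_iff_forall_maxLosing (G : SimpleGame n) (S : Finset (Fin n)) :
    G.win S ↔ ∀ T ∈ maxLosing G, ¬ S ⊆ T := by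
  refine ⟨fun hS T hT hST => hT.1 (G.mono S T hST hS), fun h => ?_⟩
  by_contra hS
  obtain ⟨T, hST, hT, hTmax⟩ := (Set.toFinite {T | ¬ G.win T}).exists_le_maximal hS
  exact h T ⟨hT, fun T' hTT' => by_contra fun hT' => hTT'.not_subset (hTmax hT' hTT'.subset)⟩ hST

lemma gameDim_le_card {ι : Type*} [Fintype ι] {win : Finset (Fin n) → Prop}
    (W : ι → Finset (Fin n) → Prop) (hW : ∀ i, IsWeighted (W i))
    (hwin : ∀ S, win S ↔ ∀ i, W i S) : gameDim win ≤ Fintype.card ι :=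
  Nat.sInf_le ⟨fun k => W ((Fintype.equivFin ι).symm k), fun _ => hW _,
    fun S => (hwin S).trans (Fintype.equivFin ι).symm.forall_congr_right.symm⟩

lemma gameDim_le_card_of_isCoveringCode (G : SimpleGame n) {C : Finset (Finset (Fin n))}
    (hC : IsCoveringCode C) : gameDim G.win ≤ #C := by
  classical
  let ball (c : Finset (Fin n)) : Finset (Finset (Fin n)) :=
    {T | T ∈ maxLosing G ∧ hdist T c ≤ 1}
  rw [← Fintype.card_coe C]
  refine gameDim_le_card (fun c : C => wins (ball c)) (fun c => ?_) fun S => ?_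
  · exact isWeighted_wins_of_hdist_le_one (fun T hT => (mem_filter.mp hT).2.2)
      ((isAntichain_maxLosing G).subset fun T hT => (mem_filter.mp hT).2.1)
  · rw [G.win_iff_forall_maxLosing]
    refine ⟨fun h c T hT => h T (mem_filter.mp hT).2.1, fun h T hT => ?_⟩
    obtain ⟨c, hc, hTc⟩ := hC T
    exact h ⟨c, hc⟩ T (mem_filter.mpr ⟨mem_univ T, hT, hTc⟩)

lemma exists_isCoveringCode_card_eq_K (n : ℕ) :
    ∃ C : Finset (Finset (Fin n)), IsCoveringCode C ∧ #C = K n :=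
  Nat.sInf_mem (s := {k | ∃ C : Finset (Finset (Fin n)), IsCoveringCode C ∧ #C = k})
    ⟨_, univ, fun x => ⟨x, mem_univ x, by simp [hdist]⟩, rfl⟩

end

theorem stmt6_general {n : ℕ} (G : SimpleGame n) :
    gameDim G.win ≤ K n := by
  obtain ⟨C, hC, hcard⟩ := exists_isCoveringCode_card_eq_K n
  exact hcard ▸ gameDim_le_card_of_isCoveringCode G hC

theorem stmt6 {n : ℕ} (hn : 1 ≤ n) (G : SimpleGame n) :
    gameDim G.win ≤ K n :=
  stmt6_general G
end

section
/- K_4 = 4: the set C = {∅, {4}, {1,2,3}, {1,2,3,4}} is a binary covering code of length 4 with covering radius 1, and no covering code of length 4 and radius 1 has fewer than 4 codewords. -/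
open Finset

/-! A radius-one Hamming ball in `{0,1}^n` has at most `n + 1` points, so a covering code of
length `n` has at least `2^n / (n + 1)` codewords; for `n = 4` this is `16 / 5 > 3`. -/

namespace CoveringCode

variable {n : ℕ}

lemma hdist_eq_card_symmDiff (x y : Finset (Fin n)) : hdist x y = (symmDiff x y).card := by
  rw [hdist, symmDiff_def, sup_eq_union, card_union_of_disjoint disjoint_sdiff_sdiff]

def ball (c : Finset (Fin n)) : Finset (Finset (Fin n)) :=
  univ.filter fun x => hdist x c ≤ 1

lemma ball_subset (c : Finset (Fin n)) :
    ball c ⊆ insert c (univ.image fun i => symmDiff c {i}) := by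
  intro x hx
  have hcard : (symmDiff c x).card ≤ 1 := by
    simpa [ball, hdist_eq_card_symmDiff, symmDiff_comm x c] using hx
  rcases Nat.le_one_iff_eq_zero_or_eq_one.1 hcard with h0 | h1
  · rw [card_eq_zero, ← bot_eq_empty, symmDiff_eq_bot] at h0
    exact mem_insert.2 (Or.inl h0.symm)
  · obtain ⟨i, hi⟩ := card_eq_one.1 h1
    refine mem_insert_of_mem (mem_image.2 ⟨i, mem_univ i, ?_⟩)
    rw [← hi, symmDiff_symmDiff_cancel_left]

lemma card_ball_le (c : Finset (Fin n)) : (ball c).card ≤ n + 1 :=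
  calc (ball c).card
      ≤ (insert c (univ.image fun i => symmDiff c {i})).card := card_le_card (ball_subset c)
    _ ≤ (univ.image fun i : Fin n => symmDiff c {i}).card + 1 := card_insert_le _ _
    _ ≤ n + 1 := by
      gcongr
      exact card_image_le.trans (card_univ.trans (Fintype.card_fin n)).le

theorem two_pow_le_card_mul {C : Finset (Finset (Fin n))} (hC : IsCoveringCode C) :
    2 ^ n ≤ C.card * (n + 1) := by
  have hcover : (univ : Finset (Finset (Fin n))) ⊆ C.biUnion ball := fun x _ => by
    obtain ⟨c, hc, hxc⟩ := hC x
    exact mem_biUnion.2 ⟨c, hc, mem_filter.2 ⟨mem_univ x, hxc⟩⟩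
  calc 2 ^ n = (univ : Finset (Finset (Fin n))).card := by simp
    _ ≤ (C.biUnion ball).card := card_le_card hcover
    _ ≤ C.card * (n + 1) := card_biUnion_le_card_mul C ball _ fun c _ => card_ball_le c

theorem K_eq {C : Finset (Finset (Fin n))} {k : ℕ} (hC : IsCoveringCode C) (hk : C.card = k)
    (hmin : ∀ C' : Finset (Finset (Fin n)), IsCoveringCode C' → k ≤ C'.card) : K n = k :=
  IsLeast.csInf_eq ⟨⟨C, hC, hk⟩, by rintro _ ⟨C', hC', rfl⟩; exact hmin C' hC'⟩

end CoveringCode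

theorem stmt10 :
    IsCoveringCode ({∅, {3}, {0, 1, 2}, Finset.univ} : Finset (Finset (Fin 4))) ∧
    (∀ C : Finset (Finset (Fin 4)), IsCoveringCode C → 4 ≤ C.card) ∧
    K 4 = 4 := by
  have hcov : IsCoveringCode ({∅, {3}, {0, 1, 2}, Finset.univ} : Finset (Finset (Fin 4))) := by
    unfold IsCoveringCode; decide
  have hlower (C : Finset (Finset (Fin 4))) (hC : IsCoveringCode C) : 4 ≤ C.card := by
    have := CoveringCode.two_pow_le_card_mul hC
    omega
  exact ⟨hcov, hlower, CoveringCode.K_eq hcov (by decide) hlower⟩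
end

section
/- For every n ≥ 1 there exists a binary covering code of length n with covering radius 1 of size at most (ln(n+1) + 1) · 2^n/(n+1); hence K_n ≤ (ln(n+1)+1) · 2^n/(n+1). -/
open Finset

/-!
A shortened Hamming code does better than the greedy bound. With `m = ⌊log₂ (n + 1)⌋` there are
at most `n` nonzero vectors in `V = 𝔽₂ᵐ`, so they can all be used as parity-check columns `f i`.
The code `{x | ∑ i ∈ x, f i = 0}` has covering radius `1`: a nonzero syndrome equals some `f i`, and
toggling `i` kills it. Translating the code by a preimage of each syndrome gives `|V|` disjoint
copies, so its size is at most `2ⁿ / 2ᵐ < 2ⁿ⁺¹ / (n + 1)`, and `2 ≤ ln (n + 1) + 1` once `n ≥ 2`.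
-/

open scoped symmDiff

lemma hdist_eq_card_symmDiff {n : ℕ} (x y : Finset (Fin n)) : hdist x y = #(x ∆ y) := by
  rw [hdist, Finset.symmDiff_def, card_union_of_disjoint disjoint_sdiff_sdiff]

section Syndrome

variable {V : Type*} [AddCommMonoid V] [Module (ZMod 2) V]

lemma add_self_eq_zero_of_zmod_two (v : V) : v + v = 0 := by
  rw [← two_smul (ZMod 2), show (2 : ZMod 2) = 0 from rfl, zero_smul]

lemma sum_symmDiff_of_zmod_two {ι : Type*} [DecidableEq ι] (f : ι → V) (s t : Finset ι) :
    ∑ i ∈ s ∆ t, f i = ∑ i ∈ s, f i + ∑ i ∈ t, f i := by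
  have hs := sum_sdiff (f := f) (inter_subset_left : s ∩ t ⊆ s)
  have ht := sum_sdiff (f := f) (inter_subset_right : s ∩ t ⊆ t)
  rw [sdiff_inter_self_left] at hs
  rw [sdiff_inter_self_right] at ht
  rw [Finset.symmDiff_def, sum_union disjoint_sdiff_sdiff, ← hs, ← ht,
    add_add_add_comm, add_self_eq_zero_of_zmod_two, add_zero]

variable {n : ℕ}

def syndromeCode [DecidableEq V] (f : Fin n → V) : Finset (Finset (Fin n)) :=
  univ.filter fun x => ∑ i ∈ x, f i = 0

variable {f : Fin n → V}

lemma isCoveringCode_syndromeCode [DecidableEq V] (hf : ∀ v ≠ 0, ∃ i, f i = v) :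
    IsCoveringCode (syndromeCode f) := by
  intro x
  by_cases hx : ∑ i ∈ x, f i = 0
  · exact ⟨x, by simpa [syndromeCode] using hx, by simp [hdist]⟩
  · obtain ⟨i, hi⟩ := hf _ hx
    refine ⟨x ∆ {i}, ?_, ?_⟩
    · rw [syndromeCode, mem_filter, sum_symmDiff_of_zmod_two, sum_singleton, hi,
        add_self_eq_zero_of_zmod_two]
      exact ⟨mem_univ _, rfl⟩
    · rw [hdist_eq_card_symmDiff, symmDiff_symmDiff_cancel_left, card_singleton]

lemma card_syndromeCode_mul_card_le [Fintype V] [DecidableEq V] (hf : ∀ v ≠ 0, ∃ i, f i = v) :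
    #(syndromeCode f) * Fintype.card V ≤ 2 ^ n := by
  let syndrome : Finset (Fin n) → V := fun x => ∑ i ∈ x, f i
  have hsurj : Function.Surjective syndrome := fun v => by
    by_cases hv : v = 0
    · exact ⟨∅, by simp [syndrome, hv]⟩
    · obtain ⟨i, hi⟩ := hf v hv
      exact ⟨{i}, by simp [syndrome, hi]⟩
  let lift := Function.surjInv hsurj
  -- `(c, v) ↦ c ∆ lift v` is injective: its syndrome is `v`, and then `c` is recovered.
  have hinj : Set.InjOn (fun p : Finset (Fin n) × V => p.1 ∆ lift p.2)
      ↑(syndromeCode f ×ˢ (univ : Finset V)) := by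
    rintro ⟨c₁, v₁⟩ hc₁ ⟨c₂, v₂⟩ hc₂ heq
    simp only [coe_product, Set.mem_prod, mem_coe, syndromeCode, mem_filter, mem_univ,
      and_true, true_and] at hc₁ hc₂ heq
    have hv : v₁ = v₂ := by
      simpa [sum_symmDiff_of_zmod_two, hc₁, hc₂, syndrome, lift,
        Function.surjInv_eq hsurj] using congrArg syndrome heq
    subst hv
    simpa using heq
  simpa [card_product] using card_le_card_of_injOn _ (fun _ _ => mem_univ _) hinj

end Syndrome

lemma exists_fun_fin_forall_ne_zero_exists_eq {V : Type*} [Zero V] [Fintype V] [DecidableEq V] {n : ℕ}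
    (hV : Fintype.card V ≤ n + 1) : ∃ f : Fin n → V, ∀ v ≠ 0, ∃ i, f i = v := by
  obtain ⟨e⟩ : Nonempty ({v : V // v ≠ 0} ↪ Fin n) :=
    Function.Embedding.nonempty_of_card_le (by simp [Fintype.card_subtype_compl]; omega)
  exact ⟨Function.extend e Subtype.val 0, fun v hv =>
    ⟨e ⟨v, hv⟩, e.injective.extend_apply _ _ _⟩⟩

lemma exists_isCoveringCode_card_mul_two_pow_log_le (n : ℕ) :
    ∃ C : Finset (Finset (Fin n)), IsCoveringCode C ∧ #C * 2 ^ Nat.log 2 (n + 1) ≤ 2 ^ n := by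
  have hV : Fintype.card (Fin (Nat.log 2 (n + 1)) → ZMod 2) ≤ n + 1 := by
    simpa using Nat.pow_log_le_self 2 n.succ_ne_zero
  obtain ⟨f, hf⟩ := exists_fun_fin_forall_ne_zero_exists_eq hV
  exact ⟨syndromeCode f, isCoveringCode_syndromeCode hf, by
    simpa using card_syndromeCode_mul_card_le hf⟩

lemma add_one_le_log_add_one_mul_two_pow_log (n : ℕ) :
    (n + 1 : ℝ) ≤ (Real.log (n + 1) + 1) * 2 ^ Nat.log 2 (n + 1) := by
  rcases Nat.lt_or_ge n 2 with hn | hn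
  · interval_cases n <;> norm_num [Nat.log]; positivity
  · have hn' : (2 : ℝ) ≤ n := by exact_mod_cast hn
    have hlog : 1 ≤ Real.log (n + 1) := by
      rw [Real.le_log_iff_exp_le (by positivity)]
      linarith [Real.exp_one_lt_three]
    have hlt : ((n + 1 : ℕ) : ℝ) < 2 ^ (Nat.log 2 (n + 1) + 1) := by
      exact_mod_cast Nat.lt_pow_succ_log_self one_lt_two (n + 1)
    push_cast at hlt
    nlinarith [pow_succ (2 : ℝ) (Nat.log 2 (n + 1))]

theorem stmt11_general {n : ℕ} :
    (∃ C : Finset (Finset (Fin n)), IsCoveringCode C ∧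
      (C.card : ℝ) ≤ (Real.log (n + 1) + 1) * 2 ^ n / (n + 1)) ∧
    (K n : ℝ) ≤ (Real.log (n + 1) + 1) * 2 ^ n / (n + 1) := by
  obtain ⟨C, hC, hcard⟩ := exists_isCoveringCode_card_mul_two_pow_log_le n
  have hA : 0 ≤ Real.log (n + 1) + 1 := by
    have : 0 ≤ Real.log (n + 1) := Real.log_nonneg (le_add_of_nonneg_left n.cast_nonneg)
    linarith
  have hbound : (#C : ℝ) ≤ (Real.log (n + 1) + 1) * 2 ^ n / (n + 1) := by
    rw [le_div_iff₀ (by positivity)]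
    calc (#C : ℝ) * (n + 1)
        ≤ #C * ((Real.log (n + 1) + 1) * 2 ^ Nat.log 2 (n + 1)) := by
          gcongr; exact add_one_le_log_add_one_mul_two_pow_log n
      _ = (#C * 2 ^ Nat.log 2 (n + 1)) * (Real.log (n + 1) + 1) := by ring
      _ ≤ 2 ^ n * (Real.log (n + 1) + 1) := by gcongr; exact_mod_cast hcard
      _ = (Real.log (n + 1) + 1) * 2 ^ n := by ring
  have hK : K n ≤ #C := Nat.sInf_le ⟨C, hC, rfl⟩
  exact ⟨⟨C, hC, hbound⟩, (Nat.cast_le.mpr hK).trans hbound⟩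

theorem stmt11 {n : ℕ} (hn : 1 ≤ n) :
    (∃ C : Finset (Finset (Fin n)), IsCoveringCode C ∧
      (C.card : ℝ) ≤ (Real.log (n + 1) + 1) * 2 ^ n / (n + 1)) ∧
    (K n : ℝ) ≤ (Real.log (n + 1) + 1) * 2 ^ n / (n + 1) :=
  stmt11_general
end

section
/- Let x, y ⊆ N be two incomparable coalitions with Hamming distance exactly 3, say |x \ y| = 2 and |y \ x| = 1. Then the simple game Γ(N, {x, y}) (where S loses iff S ⊆ x or S ⊆ y) is weighted: with quota 3, weight 3 for players in N \ (x ∪ y), weight 1 for the two players in x \ y, weight 2 for the player in y \ x, and weight 0 for players in x ∩ y, a coalition S wins iff its total weight is at least 3. -/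
open Finset

/-!
Count the players of `S` outside `x ∪ y`, in `x \ y` and in `y \ x`: say `p`, `q ≤ 2`, `r ≤ 1`.
The weight of `S` is `3p + q + 2r`, and `S` loses iff `p = 0` and (`r = 0` or `q = 0`).
Since `q ≤ 2` and `r ≤ 1`, `3p + q + 2r ≥ 3` holds exactly when `p ≥ 1` or `q, r ≥ 1`.
-/

theorem wins_pair_iff {n : ℕ} (x y S : Finset (Fin n)) :
    wins {x, y} S ↔ ¬ S ⊆ x ∧ ¬ S ⊆ y := by
  simp [wins]

theorem subset_iff_sdiff_union_and_inter_sdiff_eq_empty {α : Type*} [DecidableEq α]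
    (x y S : Finset α) : S ⊆ x ↔ S \ (x ∪ y) = ∅ ∧ S ∩ (y \ x) = ∅ := by
  simp only [subset_iff, eq_empty_iff_forall_notMem, mem_sdiff, mem_union,
    mem_inter]
  grind

theorem sum_weight_eq {n : ℕ} (x y S : Finset (Fin n)) (w : Fin n → ℝ)
    (hw : ∀ i, w i = if i ∉ x ∪ y then (3 : ℝ)
      else if i ∈ x \ y then 1 else if i ∈ y \ x then 2 else 0) :
    ∑ i ∈ S, w i = 3 * #(S \ (x ∪ y)) + #(S ∩ (x \ y)) + 2 * #(S ∩ (y \ x)) := by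
  have hw_indicator : ∀ i, w i = 3 * (if i ∉ x ∪ y then 1 else 0) + (if i ∈ x \ y then 1 else 0)
      + 2 * (if i ∈ y \ x then 1 else 0) := by
    intro i
    rw [hw]
    by_cases hx : i ∈ x <;> by_cases hy : i ∈ y <;> simp [hx, hy]
  simp only [hw_indicator, sum_add_distrib, ← mul_sum, sum_boole,
    filter_mem_eq_inter, filter_notMem_eq_sdiff]

theorem stmt12 {n : ℕ} (x y : Finset (Fin n))
    (hxy : (x \ y).card = 2) (hyx : (y \ x).card = 1)
    (w : Fin n → ℝ)
    (hw : ∀ i, w i = if i ∉ x ∪ y then (3 : ℝ)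
      else if i ∈ x \ y then 1 else if i ∈ y \ x then 2 else 0) :
    ∀ S : Finset (Fin n), wins {x, y} S ↔ (3 : ℝ) ≤ ∑ i ∈ S, w i := by
  intro S
  have hq : #(S ∩ (x \ y)) ≤ 2 := hxy ▸ card_le_card inter_subset_right
  have hr : #(S ∩ (y \ x)) ≤ 1 := hyx ▸ card_le_card inter_subset_right
  rw [wins_pair_iff, subset_iff_sdiff_union_and_inter_sdiff_eq_empty x y,
    subset_iff_sdiff_union_and_inter_sdiff_eq_empty y x, union_comm y x,
    sum_weight_eq x y S w hw, ← card_eq_zero, ← card_eq_zero, ← card_eq_zero]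
  norm_cast
  omega
end

section
/- Let Γ(N, L^M) be a simple game. Then there exists a subcollection C ⊆ L^M with pairwise Hamming distances at least 4 (i.e., for all distinct x, y ∈ C, d(x,y) ≥ 4) such that the dimension of Γ(N, L^M) is at most (|L^M| + |C|)/2. -/
open Finset

/-
Two coalitions `x, y` of `L` at Hamming distance at most `3` differ on one side in at
most one player, say `|x \ y| ≤ 1`; then "neither `S ⊆ x` nor `S ⊆ y`" is a single weighted
game (weight `|y \ x|` outside `y`, plus `1` outside `x`, quota `|y \ x| + 1`). Pairing off
close coalitions greedily, each pair costs one weighted game and each unpaired coalition one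
more, and the unpaired ones are pairwise at distance at least `4`.
-/

section

variable {n : ℕ}

lemma wins_insert (a : Finset (Fin n)) (L : Finset (Finset (Fin n))) :
    wins (insert a L) = fun S => ¬ S ⊆ a ∧ wins L S := by
  funext S
  simp [wins]

lemma pos_and_pos_iff_succ_le_mul_add (B a b : ℕ) (ha : a = 0 → b ≤ B) (hb : b = 0 → a ≤ 1) :
    (0 < a ∧ 0 < b) ↔ B + 1 ≤ B * a + b := by
  rcases Nat.lt_or_ge a 2 with ha2 | ha2
  · interval_cases a <;> simp only [mul_zero, mul_one] <;> omega
  · have : B * 2 ≤ B * a := Nat.mul_le_mul_left B ha2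
    omega

lemma isWeighted_not_subset_and_not_subset {x y : Finset (Fin n)} (hxy : #(x \ y) ≤ 1) :
    IsWeighted (fun S : Finset (Fin n) => ¬ S ⊆ x ∧ ¬ S ⊆ y) := by
  refine ⟨#(y \ x) + 1,
    fun i => #(y \ x) * (if i ∉ y then 1 else 0) + (if i ∉ x then 1 else 0),
    by positivity, fun i => by positivity, fun S => ?_⟩
  have hsum : ∑ i ∈ S, ((#(y \ x) : ℝ) * (if i ∉ y then 1 else 0) + (if i ∉ x then 1 else 0))
      = ((#(y \ x) * #(S \ y) + #(S \ x) : ℕ) : ℝ) := by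
    simp only [sum_add_distrib, ← mul_sum, sum_boole, ← sdiff_eq_filter]
    push_cast
    ring
  have hy : #(S \ y) = 0 → #(S \ x) ≤ #(y \ x) := fun h =>
    card_le_card (sdiff_subset_sdiff (sdiff_eq_empty_iff_subset.1 (card_eq_zero.1 h)) le_rfl)
  have hx : #(S \ x) = 0 → #(S \ y) ≤ 1 := fun h =>
    le_trans
      (card_le_card (sdiff_subset_sdiff (sdiff_eq_empty_iff_subset.1 (card_eq_zero.1 h)) le_rfl))
      hxy
  rw [hsum, ← Nat.cast_add_one, Nat.cast_le, ← pos_and_pos_iff_succ_le_mul_add _ _ _ hy hx,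
    card_pos, card_pos, sdiff_nonempty, sdiff_nonempty, and_comm]

lemma isWeighted_not_subset_and_not_subset_of_hdist_le {x y : Finset (Fin n)}
    (h : hdist x y ≤ 3) : IsWeighted (fun S : Finset (Fin n) => ¬ S ⊆ x ∧ ¬ S ⊆ y) := by
  rcases le_or_gt #(x \ y) 1 with hxy | hyx
  · exact isWeighted_not_subset_and_not_subset hxy
  · have hswap : (fun S : Finset (Fin n) => ¬ S ⊆ x ∧ ¬ S ⊆ y) = fun S => ¬ S ⊆ y ∧ ¬ S ⊆ x :=
      funext fun S => propext and_comm
    rw [hswap]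
    exact isWeighted_not_subset_and_not_subset (by unfold hdist at h; omega)

lemma isWeighted_not_subset (y : Finset (Fin n)) :
    IsWeighted (fun S : Finset (Fin n) => ¬ S ⊆ y) := by
  simpa using isWeighted_not_subset_and_not_subset (x := y) (y := y) (by simp)

def IsIntersectionOfWeighted (win : Finset (Fin n) → Prop) (d : ℕ) : Prop :=
  ∃ W : Fin d → (Finset (Fin n) → Prop), (∀ i, IsWeighted (W i)) ∧ ∀ S, win S ↔ ∀ i, W i S

lemma IsIntersectionOfWeighted.gameDim_le {win : Finset (Fin n) → Prop} {d : ℕ}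
    (h : IsIntersectionOfWeighted win d) : gameDim win ≤ d :=
  Nat.sInf_le h

lemma isIntersectionOfWeighted_wins_empty :
    IsIntersectionOfWeighted (wins (∅ : Finset (Finset (Fin n)))) 0 :=
  ⟨Fin.elim0, fun i => i.elim0, by simp [wins]⟩

lemma IsIntersectionOfWeighted.cons {win v : Finset (Fin n) → Prop} {d : ℕ}
    (h : IsIntersectionOfWeighted win d) (hv : IsWeighted v) :
    IsIntersectionOfWeighted (fun S => v S ∧ win S) (d + 1) := by
  obtain ⟨W, hW, hwin⟩ := h
  refine ⟨Fin.cons v W, Fin.cases hv hW, fun S => ?_⟩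
  simp [Fin.forall_fin_succ, hwin]

lemma isIntersectionOfWeighted_wins_card (L : Finset (Finset (Fin n))) :
    IsIntersectionOfWeighted (wins L) #L := by
  induction L using Finset.induction_on with
  | empty => exact isIntersectionOfWeighted_wins_empty
  | insert a L ha ih =>
    rw [wins_insert, card_insert_of_notMem ha]
    exact ih.cons (isWeighted_not_subset a)

theorem exists_separated_subset_isIntersectionOfWeighted_wins (L : Finset (Finset (Fin n))) :
    ∃ C ⊆ L, (∀ x ∈ C, ∀ y ∈ C, x ≠ y → 4 ≤ hdist x y) ∧
      ∃ d, IsIntersectionOfWeighted (wins L) d ∧ 2 * d ≤ #L + #C := by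
  induction L using Finset.strongInduction with
  | H L ih =>
  by_cases hsep : ∀ x ∈ L, ∀ y ∈ L, x ≠ y → 4 ≤ hdist x y
  · exact ⟨L, subset_rfl, hsep, #L, isIntersectionOfWeighted_wins_card L, by omega⟩
  simp only [not_forall, not_le] at hsep
  obtain ⟨x, hx, y, hy, hne, hclose⟩ := hsep
  have hyx : y ∈ L.erase x := mem_erase.2 ⟨hne.symm, hy⟩
  have hcard : #((L.erase x).erase y) + 2 = #L := by
    rw [← card_erase_add_one hx, ← card_erase_add_one hyx]
  set L' := (L.erase x).erase y
  have hL : L = insert x (insert y L') := by rw [insert_erase hyx, insert_erase hx]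
  obtain ⟨C, hCL', hCsep, d, hd, hdC⟩ :=
    ih L' ((erase_subset _ _).trans_ssubset (erase_ssubset hx))
  refine ⟨C, hCL'.trans ((erase_subset _ _).trans (erase_subset _ _)), hCsep, d + 1, ?_, by omega⟩
  rw [hL, wins_insert, wins_insert]
  simpa only [and_assoc] using
    hd.cons (isWeighted_not_subset_and_not_subset_of_hdist_le (Nat.le_of_lt_succ hclose))

end

theorem stmt14_general {n : ℕ} (L : Finset (Finset (Fin n))) :
    ∃ C : Finset (Finset (Fin n)), C ⊆ L ∧
      (∀ x ∈ C, ∀ y ∈ C, x ≠ y → 4 ≤ hdist x y) ∧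
      (gameDim (wins L) : ℝ) ≤ ((L.card : ℝ) + C.card) / 2 := by
  obtain ⟨C, hCL, hsep, d, hd, hdC⟩ := exists_separated_subset_isIntersectionOfWeighted_wins L
  refine ⟨C, hCL, hsep, ?_⟩
  have hdim : 2 * gameDim (wins L) ≤ #L + #C := (Nat.mul_le_mul_left 2 hd.gameDim_le).trans hdC
  rw [le_div_iff₀ two_pos]
  exact_mod_cast (by omega : gameDim (wins L) * 2 ≤ #L + #C)

theorem stmt14 {n : ℕ} (L : Finset (Finset (Fin n)))
    (hanti : IsAntichain (· ⊆ ·) (L : Set (Finset (Fin n)))) :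
    ∃ C : Finset (Finset (Fin n)), C ⊆ L ∧
      (∀ x ∈ C, ∀ y ∈ C, x ≠ y → 4 ≤ hdist x y) ∧
      (gameDim (wins L) : ℝ) ≤ ((L.card : ℝ) + C.card) / 2 :=
  stmt14_general L
end
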